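/- For t ∈ (−1,1) \ {0} and θ ∈ [0, 2π), let π_θ^t denote the orthogonal projection of ℝ³ onto the orthogonal complement of γ_t(θ) = (√(1−t²) cos θ, √(1−t²) sin θ, t), write π_θ = π_θ^{1/√2}, and let B_t : ℝ³ → ℝ³ be the invertible linear map B_t(x, y, r) = (x, y, r√(1−t²)/t). Then for every set K ⊂ ℝ³ and every θ ∈ [0, 2π), dim_H π_θ^t(K) = dim_H π_θ(B_t(K)). -/

import Mathlib

open MeasureTheory Metric Real

/-- `ℝ³` as a Euclidean space. -/
noncomputable abbrev E3 := EuclideanSpace ℝ (Fin 3)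

/-- The vector `(a, b, c) ∈ ℝ³`. -/
noncomputable def vec3 (a b c : ℝ) : E3 := (WithLp.equiv 2 (Fin 3 → ℝ)).symm ![a, b, c]

/-- The unit vector `γ_t(θ) = (√(1−t²) cos θ, √(1−t²) sin θ, t)`. -/
noncomputable def gammaT (t θ : ℝ) : E3 :=
  vec3 (Real.sqrt (1 - t ^ 2) * Real.cos θ) (Real.sqrt (1 - t ^ 2) * Real.sin θ) t

/-- The orthogonal projection `π_θ^t` of `ℝ³` onto `γ_t(θ)^⊥`, viewed as a map `ℝ³ → ℝ³`. -/
noncomputable def projT (t θ : ℝ) (z : E3) : E3 :=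
  (Submodule.orthogonalProjection (ℝ ∙ gammaT t θ)ᗮ z : E3)

/-- The invertible linear map `B_t(x, y, r) = (x, y, r√(1−t²)/t)`. -/
noncomputable def Bt (t : ℝ) (z : E3) : E3 := vec3 (z 0) (z 1) (z 2 * Real.sqrt (1 - t ^ 2) / t)

/-! If a linear isomorphism `L` maps the line `𝕜 ∙ u` onto the line `𝕜 ∙ v`, then `π_{v⊥} ∘ L`
kills `u`, so it factors through `π_{u⊥}`: `π_{v⊥} (L K) = (π_{v⊥} ∘ L) (π_{u⊥} K)`. Lipschitz maps
do not increase Hausdorff dimension, hence `dim_H π_{v⊥} (L K) ≤ dim_H π_{u⊥} K`, and the same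
argument for `L⁻¹` gives the reverse inequality. The map `B_t` sends `γ_t(θ)` to
`√(2(1 - t²)) γ_{1/√2}(θ)`. -/

namespace Submodule

variable {𝕜 E F : Type*} [RCLike 𝕜] [NormedAddCommGroup E] [InnerProductSpace 𝕜 E]
  [NormedAddCommGroup F] [InnerProductSpace 𝕜 F]
  {U : Submodule 𝕜 E} {V : Submodule 𝕜 F} [U.HasOrthogonalProjection] [V.HasOrthogonalProjection]

theorem starProjection_orthogonal_map_starProjection_orthogonal (L : E →L[𝕜] F)
    (hUV : ∀ x ∈ U, L x ∈ V) (z : E) :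
    Vᗮ.starProjection (L (Uᗮ.starProjection z)) = Vᗮ.starProjection (L z) := by
  conv_rhs => rw [← U.starProjection_add_starProjection_orthogonal z, map_add, map_add,
    starProjection_orthogonal_apply_eq_zero (hUV _ (U.starProjection_apply_mem z)), zero_add]

theorem dimH_image_starProjection_orthogonal_image_le (L : E →L[𝕜] F)
    (hUV : ∀ x ∈ U, L x ∈ V) (K : Set E) :
    dimH (Vᗮ.starProjection '' (L '' K)) ≤ dimH (Uᗮ.starProjection '' K) := by
  have hfactor : Vᗮ.starProjection '' (L '' K) =
      (Vᗮ.starProjection ∘L L) '' (Uᗮ.starProjection '' K) := by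
    simp only [Set.image_image, ContinuousLinearMap.comp_apply,
      starProjection_orthogonal_map_starProjection_orthogonal L hUV]
  rw [hfactor]
  exact (ContinuousLinearMap.lipschitz _).dimH_image_le _

theorem dimH_image_starProjection_orthogonal_image (L : E ≃L[𝕜] F)
    (hUV : ∀ x ∈ U, L x ∈ V) (hVU : ∀ y ∈ V, L.symm y ∈ U) (K : Set E) :
    dimH (Vᗮ.starProjection '' (L '' K)) = dimH (Uᗮ.starProjection '' K) := by
  refine le_antisymm (dimH_image_starProjection_orthogonal_image_le (L : E →L[𝕜] F) hUV K) ?_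
  simpa only [ContinuousLinearEquiv.coe_coe, ContinuousLinearEquiv.symm_image_image] using
    dimH_image_starProjection_orthogonal_image_le (L.symm : F →L[𝕜] E) hVU (L '' K)

theorem dimH_image_starProjection_orthogonal_span_singleton_image (L : E ≃L[𝕜] F) {u : E}
    {v : F} {c : 𝕜} (hc : c ≠ 0) (hLu : L u = c • v) (K : Set E) :
    dimH ((𝕜 ∙ v)ᗮ.starProjection '' (L '' K)) = dimH ((𝕜 ∙ u)ᗮ.starProjection '' K) := by
  refine dimH_image_starProjection_orthogonal_image L ?_ ?_ K
  · intro x hx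
    obtain ⟨a, rfl⟩ := mem_span_singleton.mp hx
    exact mem_span_singleton.mpr ⟨a * c, by rw [map_smul, hLu, smul_smul]⟩
  · intro y hy
    obtain ⟨b, rfl⟩ := mem_span_singleton.mp hy
    have hLv : L.symm v = c⁻¹ • u := by
      rw [L.symm_apply_eq, map_smul, hLu, smul_smul, inv_mul_cancel₀ hc, one_smul]
    exact mem_span_singleton.mpr ⟨b * c⁻¹, by rw [map_smul, hLv, smul_smul]⟩

end Submodule

noncomputable def scaleLastCoord (a : ℝ) (ha : a ≠ 0) : E3 ≃L[ℝ] E3 :=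
  LinearEquiv.toContinuousLinearEquiv
    { toFun := fun z => vec3 (z 0) (z 1) (z 2 * a)
      invFun := fun z => vec3 (z 0) (z 1) (z 2 / a)
      map_add' := fun x y => by ext i; fin_cases i <;> simp [vec3, add_mul]
      map_smul' := fun c x => by ext i; fin_cases i <;> simp [vec3, mul_assoc]
      left_inv := fun z => by ext i; fin_cases i <;> simp [vec3, ha]
      right_inv := fun z => by ext i; fin_cases i <;> simp [vec3, ha] }

lemma Bt_eq_scaleLastCoord {t : ℝ} (ha : √(1 - t ^ 2) / t ≠ 0) :
    Bt t = scaleLastCoord (√(1 - t ^ 2) / t) ha := by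
  ext z : 1
  simp only [Bt, mul_div_assoc]
  rfl

lemma projT_eq_starProjection (t θ : ℝ) : projT t θ = (ℝ ∙ gammaT t θ)ᗮ.starProjection := rfl

lemma sqrt_one_sub_inv_sqrt_two_sq : √(1 - (√2)⁻¹ ^ 2) = (√2)⁻¹ := by
  rw [inv_pow, Real.sq_sqrt zero_le_two, ← Real.sqrt_inv]
  norm_num

lemma Bt_gammaT {t : ℝ} (ht0 : t ≠ 0) (θ : ℝ) :
    Bt t (gammaT t θ) = (√(1 - t ^ 2) * √2) • gammaT (√2)⁻¹ θ := by
  simp only [gammaT, sqrt_one_sub_inv_sqrt_two_sq]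
  ext i
  fin_cases i <;> simp [Bt, vec3, ht0] <;> field_simp

theorem stmt4_general (t : ℝ) (ht : t ∈ Set.Ioo (-1 : ℝ) 1) (ht0 : t ≠ 0)
    (K : Set E3) (θ : ℝ) :
    dimH (projT t θ '' K) = dimH (projT (Real.sqrt 2)⁻¹ θ '' (Bt t '' K)) := by
  have hs : √(1 - t ^ 2) ≠ 0 := (Real.sqrt_pos.mpr (by nlinarith [ht.1, ht.2])).ne'
  have hscale := Bt_eq_scaleLastCoord (div_ne_zero hs ht0)
  rw [projT_eq_starProjection, projT_eq_starProjection, hscale]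
  refine (Submodule.dimH_image_starProjection_orthogonal_span_singleton_image _
    (c := √(1 - t ^ 2) * √2) (mul_ne_zero hs (by positivity)) ?_ K).symm
  rw [← hscale, Bt_gammaT ht0]

/-- For `t ∈ (−1,1) \ {0}`, every set `K ⊂ ℝ³` and every `θ ∈ [0, 2π)`,
`dim_H π_θ^t(K) = dim_H π_θ(B_t(K))`, where `π_θ = π_θ^{1/√2}`. -/
theorem stmt4 (t : ℝ) (ht : t ∈ Set.Ioo (-1 : ℝ) 1) (ht0 : t ≠ 0)
    (K : Set E3) (θ : ℝ) (hθ : θ ∈ Set.Ico (0 : ℝ) (2 * π)) :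
    dimH (projT t θ '' K) = dimH (projT (Real.sqrt 2)⁻¹ θ '' (Bt t '' K)) :=
  stmt4_general t ht ht0 K θ
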